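/- arXiv:1008.0153 — 6 statements merged into one kernel-verified Lean document; each statement's English description precedes it below -/
import Mathlib

section
/- If T is a directed X-forest contained in a pedigree P with e(P) arcs and e(T) arcs, then the number of spanning forests of P containing T equals 2^{(e(P)-2e(T))/2}. -/
/-- In-degree of a vertex `v` in an arc set `E` (arcs are parent → child pairs). -/
def indeg {V : Type*} [DecidableEq V] (E : Finset (V × V)) (v : V) : ℕ :=
  (E.filter fun a => a.2 = v).card

/-- The vertices touched by an arc set. -/
def verts {V : Type*} [DecidableEq V] (T : Finset (V × V)) : Finset V :=
  T.image Prod.fst ∪ T.image Prod.snd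

lemma indeg_mono {V : Type*} [DecidableEq V] {T E : Finset (V × V)} (h : T ⊆ E) (v : V) :
    indeg T v ≤ indeg E v :=
  Finset.card_le_card (Finset.filter_subset_filter _ h)

lemma indeg_insert {V : Type*} [DecidableEq V] (a : V × V) (T : Finset (V × V))
    (ha : a ∉ T) (w : V) :
    indeg (insert a T) w = indeg T w + if a.2 = w then 1 else 0 := by
  unfold indeg
  rw [Finset.filter_insert]
  split <;> simp_all [Finset.card_insert_of_notMem, fun h => ha (Finset.mem_filter.mp h).1]

lemma aux {V : Type*} [Fintype V] [DecidableEq V]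
    (E : Finset (V × V))
    (hdeg : ∀ v : V, indeg E v = 0 ∨ indeg E v = 2) :
    ∀ (n : ℕ) (T : Finset (V × V)), T ⊆ E → (∀ v : V, indeg T v ≤ 1) →
      (Finset.univ.filter fun v => indeg E v ≠ 0 ∧ indeg T v = 0).card = n →
      {G : Finset (V × V) | G ⊆ E ∧
          (∀ v : V, indeg G v = if indeg E v = 0 then 0 else 1) ∧ T ⊆ G}.ncard = 2 ^ n := by
  intro n
  induction n with
  | zero =>
    intro T hTE hTf hcard
    have hfull : ∀ v : V, indeg E v ≠ 0 → indeg T v = 1 := by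
      intro v hv
      have : v ∉ Finset.univ.filter fun v => indeg E v ≠ 0 ∧ indeg T v = 0 := by
        rw [Finset.card_eq_zero] at hcard; simp [hcard]
      simp only [Finset.mem_filter, Finset.mem_univ, true_and, not_and] at this
      have := this hv
      have h1 := hTf v
      omega
    have hset : {G : Finset (V × V) | G ⊆ E ∧
        (∀ v : V, indeg G v = if indeg E v = 0 then 0 else 1) ∧ T ⊆ G} = {T} := by
      ext G
      simp only [Set.mem_setOf_eq, Set.mem_singleton_iff]
      constructor
      · rintro ⟨hGE, hGdeg, hTG⟩
        refine le_antisymm ?_ hTG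
        intro a haG
        have hv2 : a.2 = a.2 := rfl
        have haE : a ∈ E := hGE haG
        have hne : indeg E a.2 ≠ 0 :=
          Finset.card_ne_zero_of_mem (Finset.mem_filter.mpr ⟨haE, rfl⟩)
        have hG1 : indeg G a.2 = 1 := by rw [hGdeg a.2]; simp [hne]
        have hT1 : indeg T a.2 = 1 := hfull _ hne
        have hsub : T.filter (fun x => x.2 = a.2) ⊆ G.filter (fun x => x.2 = a.2) :=
          Finset.filter_subset_filter _ hTG
        have heq : T.filter (fun x => x.2 = a.2) = G.filter (fun x => x.2 = a.2) :=
          Finset.eq_of_subset_of_card_le hsub (by unfold indeg at hG1 hT1; omega)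
        have : a ∈ G.filter (fun x => x.2 = a.2) := Finset.mem_filter.mpr ⟨haG, rfl⟩
        rw [← heq] at this
        exact (Finset.mem_filter.mp this).1
      · rintro rfl
        refine ⟨hTE, ?_, le_refl _⟩
        intro v
        rcases hdeg v with h | h
        · have := indeg_mono hTE v
          simp [h]; omega
        · have : indeg E v ≠ 0 := by omega
          simp [this, hfull v this]
    rw [hset]
    simp
  | succ n ih =>
    intro T hTE hTf hcard
    have hpos : 0 < (Finset.univ.filter fun v => indeg E v ≠ 0 ∧ indeg T v = 0).card := by
      omega
    obtain ⟨v, hv⟩ := Finset.card_pos.mp hpos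
    simp only [Finset.mem_filter, Finset.mem_univ, true_and] at hv
    obtain ⟨hvE, hvT⟩ := hv
    have hvE2 : indeg E v = 2 := by rcases hdeg v with h | h <;> omega
    obtain ⟨a, b, hab, hEab⟩ := Finset.card_eq_two.mp hvE2
    have haE : a ∈ E ∧ a.2 = v := by
      have : a ∈ E.filter fun x => x.2 = v := by rw [hEab]; simp
      simpa using Finset.mem_filter.mp this
    have hbE : b ∈ E ∧ b.2 = v := by
      have : b ∈ E.filter fun x => x.2 = v := by rw [hEab]; simp
      simpa using Finset.mem_filter.mp this
    have haT : a ∉ T := by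
      intro h
      have : a ∈ T.filter fun x => x.2 = v := Finset.mem_filter.mpr ⟨h, haE.2⟩
      unfold indeg at hvT
      rw [Finset.card_eq_zero] at hvT
      simp [hvT] at this
    have hbT : b ∉ T := by
      intro h
      have : b ∈ T.filter fun x => x.2 = v := Finset.mem_filter.mpr ⟨h, hbE.2⟩
      unfold indeg at hvT
      rw [Finset.card_eq_zero] at hvT
      simp [hvT] at this
    -- properties of T with one arc into v added
    have key : ∀ c : V × V, c ∈ E → c.2 = v → c ∉ T →
        (insert c T ⊆ E ∧ (∀ w, indeg (insert c T) w ≤ 1) ∧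
         (Finset.univ.filter fun w => indeg E w ≠ 0 ∧ indeg (insert c T) w = 0).card = n) := by
      intro c hcE hcv hcT
      refine ⟨Finset.insert_subset hcE hTE, ?_, ?_⟩
      · intro w
        rw [indeg_insert c T hcT w]
        by_cases hw : c.2 = w
        · have hwv : w = v := by rw [← hw, hcv]
          subst hwv
          simp [hw, hvT]
        · simp [hw]; exact hTf w
      · have hfe : (Finset.univ.filter fun w => indeg E w ≠ 0 ∧ indeg (insert c T) w = 0)
            = (Finset.univ.filter fun w => indeg E w ≠ 0 ∧ indeg T w = 0).erase v := by
          ext w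
          simp only [Finset.mem_filter, Finset.mem_univ, true_and, Finset.mem_erase]
          rw [indeg_insert c T hcT w, hcv]
          constructor
          · rintro ⟨h1, h2⟩
            by_cases hwv : v = w
            · exfalso; simp [hwv] at h2
            · simp [hwv] at h2; exact ⟨fun h => hwv h.symm, h1, h2⟩
          · rintro ⟨h0, h1, h2⟩
            have : v ≠ w := fun h => h0 h.symm
            simp [this]; exact ⟨h1, h2⟩
        rw [hfe, Finset.card_erase_of_mem (by simp [hvE, hvT]), hcard]
        omega
    obtain ⟨haE', haf, hacard⟩ := key a haE.1 haE.2 haT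
    obtain ⟨hbE', hbf, hbcard⟩ := key b hbE.1 hbE.2 hbT
    have hA := ih (insert a T) haE' haf hacard
    have hB := ih (insert b T) hbE' hbf hbcard
    have hunion : {G : Finset (V × V) | G ⊆ E ∧
          (∀ w : V, indeg G w = if indeg E w = 0 then 0 else 1) ∧ T ⊆ G}
        = {G : Finset (V × V) | G ⊆ E ∧
          (∀ w : V, indeg G w = if indeg E w = 0 then 0 else 1) ∧ insert a T ⊆ G}
        ∪ {G : Finset (V × V) | G ⊆ E ∧
          (∀ w : V, indeg G w = if indeg E w = 0 then 0 else 1) ∧ insert b T ⊆ G} := by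
      ext G
      simp only [Set.mem_setOf_eq, Set.mem_union]
      constructor
      · rintro ⟨hGE, hGdeg, hTG⟩
        have hG1 : indeg G v = 1 := by rw [hGdeg v]; simp [hvE]
        have : ∃ c, G.filter (fun x => x.2 = v) = {c} := Finset.card_eq_one.mp hG1
        obtain ⟨c, hc⟩ := this
        have hcG : c ∈ G ∧ c.2 = v := by
          have : c ∈ G.filter fun x => x.2 = v := by rw [hc]; simp
          simpa using Finset.mem_filter.mp this
        have hcab : c ∈ E.filter fun x => x.2 = v :=
          Finset.mem_filter.mpr ⟨hGE hcG.1, hcG.2⟩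
        rw [hEab] at hcab
        simp only [Finset.mem_insert, Finset.mem_singleton] at hcab
        rcases hcab with rfl | rfl
        · exact Or.inl ⟨hGE, hGdeg, Finset.insert_subset hcG.1 hTG⟩
        · exact Or.inr ⟨hGE, hGdeg, Finset.insert_subset hcG.1 hTG⟩
      · rintro (⟨h1, h2, h3⟩ | ⟨h1, h2, h3⟩) <;>
          exact ⟨h1, h2, fun x hx => h3 (Finset.mem_insert_of_mem hx)⟩
    have hdisj : Disjoint
        {G : Finset (V × V) | G ⊆ E ∧
          (∀ w : V, indeg G w = if indeg E w = 0 then 0 else 1) ∧ insert a T ⊆ G}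
        {G : Finset (V × V) | G ⊆ E ∧
          (∀ w : V, indeg G w = if indeg E w = 0 then 0 else 1) ∧ insert b T ⊆ G} := by
      rw [Set.disjoint_left]
      rintro G ⟨_, hGdeg, hGa⟩ ⟨_, _, hGb⟩
      have hG1 : indeg G v = 1 := by rw [hGdeg v]; simp [hvE]
      have hsub : ({a, b} : Finset (V × V)) ⊆ G.filter fun x => x.2 = v := by
        intro x hx
        simp only [Finset.mem_insert, Finset.mem_singleton] at hx
        rcases hx with rfl | rfl
        · exact Finset.mem_filter.mpr ⟨hGa (Finset.mem_insert_self _ _), haE.2⟩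
        · exact Finset.mem_filter.mpr ⟨hGb (Finset.mem_insert_self _ _), hbE.2⟩
      have := Finset.card_le_card hsub
      rw [Finset.card_pair hab] at this
      unfold indeg at hG1
      omega
    rw [hunion, Set.ncard_union_eq hdisj (Set.toFinite _) (Set.toFinite _), hA, hB]
    ring

/-- If `T` is a directed X-forest contained in a pedigree `P` (a DAG whose in-degrees
are all 0 or 2), then the number of spanning forests of `P` containing `T` equals
`2 ^ ((e(P) - 2 e(T)) / 2)`.  A directed X-forest of `P` is a subforest in which every
vertex has in-degree at most 1 and every root (in-degree-0 vertex) is a founder of `P`. -/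
theorem stmt_2 {V : Type*} [Fintype V] [DecidableEq V]
    (E : Finset (V × V))
    (hacyc : ∃ f : V → ℕ, ∀ a ∈ E, f a.1 < f a.2)
    (hdeg : ∀ v : V, indeg E v = 0 ∨ indeg E v = 2)
    (T : Finset (V × V)) (hTE : T ⊆ E)
    (hTforest : ∀ v : V, indeg T v ≤ 1)
    (hTroot : ∀ v ∈ verts T, indeg T v = 0 → indeg E v = 0) :
    {G : Finset (V × V) | G ⊆ E ∧
        (∀ v : V, indeg G v = if indeg E v = 0 then 0 else 1) ∧ T ⊆ G}.ncard
      = 2 ^ ((E.card - 2 * T.card) / 2) := by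
  set S := Finset.univ.filter fun v => indeg E v ≠ 0 ∧ indeg T v = 0 with hS
  rw [aux E hdeg S.card T hTE hTforest rfl]
  congr 1
  -- card computations
  have hEcard : E.card = ∑ v : V, indeg E v :=
    Finset.card_eq_sum_card_fiberwise (f := Prod.snd) (t := Finset.univ) (by simp)
  have hTcard : T.card = ∑ v : V, indeg T v :=
    Finset.card_eq_sum_card_fiberwise (f := Prod.snd) (t := Finset.univ) (by simp)
  have hEsum : ∑ v : V, indeg E v = 2 * (Finset.univ.filter fun v => indeg E v ≠ 0).card := by
    rw [← Finset.sum_filter_ne_zero]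
    rw [Finset.sum_congr rfl (fun v hv => by
      rcases hdeg v with h | h
      · exact absurd h (Finset.mem_filter.mp hv).2
      · exact h)]
    simp [mul_comm]
  have hTsum : ∑ v : V, indeg T v = (Finset.univ.filter fun v => indeg T v = 1).card := by
    rw [← Finset.sum_filter_ne_zero]
    have : (Finset.univ.filter fun v => indeg T v ≠ 0)
        = (Finset.univ.filter fun v => indeg T v = 1) := by
      ext v; simp only [Finset.mem_filter, Finset.mem_univ, true_and]
      have := hTforest v; omega
    rw [this, Finset.sum_congr rfl (fun v hv => (Finset.mem_filter.mp hv).2)]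
    simp
  have hsub : (Finset.univ.filter fun v => indeg T v = 1)
      ⊆ (Finset.univ.filter fun v => indeg E v ≠ 0) := by
    intro v hv
    simp only [Finset.mem_filter, Finset.mem_univ, true_and] at *
    have := indeg_mono hTE v
    omega
  have hSdiff : S = (Finset.univ.filter fun v => indeg E v ≠ 0)
      \ (Finset.univ.filter fun v => indeg T v = 1) := by
    ext v
    simp only [hS, Finset.mem_filter, Finset.mem_univ, true_and, Finset.mem_sdiff]
    have := hTforest v
    omega
  have hScard : S.card = (Finset.univ.filter fun v => indeg E v ≠ 0).card
      - (Finset.univ.filter fun v => indeg T v = 1).card := by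
    rw [hSdiff, Finset.card_sdiff_of_subset hsub]
  have hle := Finset.card_le_card hsub
  omega
end

section
/- Each spanning forest of a pedigree contains exactly one directed X-forest of the pedigree. -/
/-- Out-degree of a vertex `v` in an arc set `E`. -/
def outdeg {V : Type*} [DecidableEq V] (E : Finset (V × V)) (v : V) : ℕ :=
  (E.filter fun a => a.1 = v).card

/-- Each spanning forest `G` of a pedigree contains exactly one directed X-forest of
the pedigree.  Here a pedigree is a DAG with all in-degrees 0 or 2, `X` is its set of
out-degree-0 (extant) vertices, a spanning forest gives each non-founder in-degree
exactly 1, and a directed X-forest `T ⊆ G` is an arc set in which (w.r.t. its vertex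
set, i.e. its arc endpoints together with `X`) every vertex has in-degree at most 1,
every in-degree-0 vertex is a founder of the pedigree, and the out-degree-0 vertices
are exactly the extant vertices `X`. -/
theorem stmt_3 {V : Type*} [Fintype V] [DecidableEq V]
    (E : Finset (V × V))
    (hacyc : ∃ f : V → ℕ, ∀ a ∈ E, f a.1 < f a.2)
    (hdeg : ∀ v : V, indeg E v = 0 ∨ indeg E v = 2)
    (X : Finset V) (hX : ∀ v : V, v ∈ X ↔ outdeg E v = 0)
    (G : Finset (V × V)) (hG : G ⊆ E)
    (hGdeg : ∀ v : V, indeg G v = if indeg E v = 0 then 0 else 1) :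
    ∃! T : Finset (V × V), T ⊆ G ∧
      (∀ v ∈ verts T ∪ X, indeg T v ≤ 1) ∧
      (∀ v ∈ verts T ∪ X, indeg T v = 0 → indeg E v = 0) ∧
      (∀ v ∈ verts T ∪ X, (outdeg T v = 0 ↔ v ∈ X)) := by
  classical
  obtain ⟨f, hf⟩ := hacyc
  set r : V → V → Prop := fun a b => (a, b) ∈ G with hr
  set reach : V → Prop := fun v => ∃ x ∈ X, Relation.ReflTransGen r v x with hreach
  set T : Finset (V × V) := G.filter (fun a => reach a.2) with hT
  have hTG : T ⊆ G := Finset.filter_subset _ _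
  have hindegpos : ∀ {u v : V}, (u, v) ∈ E → indeg E v ≠ 0 := by
    intro u v huv
    exact Finset.card_ne_zero_of_mem (Finset.mem_filter.2 ⟨huv, rfl⟩)
  have hGle : ∀ v, indeg G v ≤ 1 := by
    intro v; rw [hGdeg v]; split <;> omega
  have hGuniq : ∀ {u u' v : V}, (u, v) ∈ G → (u', v) ∈ G → u = u' := by
    intro u u' v h1 h2
    have h := Finset.card_le_one.mp (hGle v) (u, v)
      (Finset.mem_filter.2 ⟨h1, rfl⟩) (u', v) (Finset.mem_filter.2 ⟨h2, rfl⟩)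
    exact congrArg Prod.fst h
  have harcG : ∀ {a : V × V}, a ∈ G → r a.1 a.2 := by
    intro a ha; show (a.1, a.2) ∈ G; simpa using ha
  -- every vertex of verts T ∪ X reaches X
  have hreachT : ∀ v ∈ verts T ∪ X, reach v := by
    intro v hv
    rcases Finset.mem_union.mp hv with hv | hv
    · rcases Finset.mem_union.mp hv with hv | hv
      · rcases Finset.mem_image.mp hv with ⟨a, ha, rfl⟩
        obtain ⟨haG, x, hx, hpath⟩ := Finset.mem_filter.mp ha
        exact ⟨x, hx, Relation.ReflTransGen.head (harcG haG) hpath⟩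
      · rcases Finset.mem_image.mp hv with ⟨a, ha, rfl⟩
        exact (Finset.mem_filter.mp ha).2
    · exact ⟨v, hv, Relation.ReflTransGen.refl⟩
  have hnext : ∀ v, reach v → v ∉ X → ∃ w, (v, w) ∈ G ∧ reach w := by
    rintro v ⟨x, hx, hpath⟩ hvX
    rcases hpath.cases_head with rfl | ⟨w, hw, hpath'⟩
    · exact absurd hx hvX
    · exact ⟨w, hw, x, hx, hpath'⟩
  refine ⟨T, ⟨hTG, ?_, ?_, ?_⟩, ?_⟩
  · intro v _
    calc indeg T v ≤ indeg G v :=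
          Finset.card_le_card (Finset.filter_subset_filter _ hTG)
      _ ≤ 1 := hGle v
  · intro v hv h0
    by_contra hE0
    have h1 : indeg G v = 1 := by rw [hGdeg v]; simp [hE0]
    obtain ⟨a, ha⟩ := Finset.card_pos.mp (by omega : 0 < indeg G v)
    obtain ⟨haG, ha2⟩ := Finset.mem_filter.mp ha
    have haT : a ∈ T := Finset.mem_filter.2 ⟨haG, by rw [ha2]; exact hreachT v hv⟩
    have : a ∈ T.filter (fun a => a.2 = v) := Finset.mem_filter.2 ⟨haT, ha2⟩
    exact absurd h0 (Finset.card_ne_zero_of_mem this)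
  · intro v hv
    constructor
    · intro h0
      by_contra hvX
      obtain ⟨w, hwG, hwreach⟩ := hnext v (hreachT v hv) hvX
      have : (v, w) ∈ T.filter (fun a => a.1 = v) :=
        Finset.mem_filter.2 ⟨Finset.mem_filter.2 ⟨hwG, hwreach⟩, rfl⟩
      exact absurd h0 (Finset.card_ne_zero_of_mem this)
    · intro hvX
      have hE0 : outdeg E v = 0 := (hX v).mp hvX
      have hsub : T.filter (fun a => a.1 = v) ⊆ E.filter (fun a => a.1 = v) :=
        Finset.filter_subset_filter _ (hTG.trans hG)
      have := Finset.card_le_card hsub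
      unfold outdeg at hE0 ⊢; omega
  -- uniqueness
  · rintro T' ⟨hsub, _, hzero, hout⟩
    -- every vertex of verts T' ∪ X reaches X
    have hkey : ∀ k v, Finset.univ.sup f - f v ≤ k → v ∈ verts T' ∪ X → reach v := by
      intro k
      induction k with
      | zero =>
        intro v hk hv
        by_cases hvX : v ∈ X
        · exact ⟨v, hvX, Relation.ReflTransGen.refl⟩
        · exfalso
          have hne : outdeg T' v ≠ 0 := fun h => hvX ((hout v hv).mp h)
          obtain ⟨a, ha⟩ := Finset.card_pos.mp (Nat.pos_of_ne_zero hne)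
          obtain ⟨haT', ha1⟩ := Finset.mem_filter.mp ha
          have h1 : f a.1 < f a.2 := hf a (hG (hsub haT'))
          have h2 : f a.2 ≤ Finset.univ.sup f := Finset.le_sup (Finset.mem_univ a.2)
          have h3 : f v ≤ Finset.univ.sup f := Finset.le_sup (Finset.mem_univ v)
          rw [ha1] at h1
          omega
      | succ k ih =>
        intro v hk hv
        by_cases hvX : v ∈ X
        · exact ⟨v, hvX, Relation.ReflTransGen.refl⟩
        · have hne : outdeg T' v ≠ 0 := fun h => hvX ((hout v hv).mp h)
          obtain ⟨a, ha⟩ := Finset.card_pos.mp (Nat.pos_of_ne_zero hne)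
          obtain ⟨haT', ha1⟩ := Finset.mem_filter.mp ha
          have h1 : f a.1 < f a.2 := hf a (hG (hsub haT'))
          have h2 : f a.2 ≤ Finset.univ.sup f := Finset.le_sup (Finset.mem_univ a.2)
          rw [ha1] at h1
          have hw : a.2 ∈ verts T' ∪ X :=
            Finset.mem_union_left _ (Finset.mem_union_right _
              (Finset.mem_image_of_mem Prod.snd haT'))
          obtain ⟨x, hx, hpath⟩ := ih a.2 (by omega) hw
          have harc : r v a.2 := by
            show (v, a.2) ∈ G
            have : (a.1, a.2) = a := by simp
            rw [← ha1] at *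
            simpa [this] using hsub haT'
          exact ⟨x, hx, Relation.ReflTransGen.head harc hpath⟩
    have hreachT' : ∀ v ∈ verts T' ∪ X, reach v := fun v hv => hkey _ v le_rfl hv
    -- every vertex reaching X is in verts T' ∪ X
    have hmemT' : ∀ v, reach v → v ∈ verts T' ∪ X := by
      rintro v ⟨x, hx, hpath⟩
      induction hpath using Relation.ReflTransGen.head_induction_on with
      | refl => exact Finset.mem_union_right _ hx
      | head hac hcb ih =>
        rename_i a c
        have hacG : (a, c) ∈ G := hac
        have hne : indeg T' c ≠ 0 := fun h =>
          hindegpos (hG hacG) (hzero c ih h)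
        obtain ⟨b, hb⟩ := Finset.card_pos.mp (Nat.pos_of_ne_zero hne)
        obtain ⟨hbT', hb2⟩ := Finset.mem_filter.mp hb
        have : b.1 = a := hGuniq (by rw [← hb2]; simpa using hsub hbT') hacG
        have hbT'' : (a, c) ∈ T' := by
          have : (b.1, b.2) = (a, c) := by rw [this, hb2]
          rwa [← this, Prod.mk.eta]
        exact Finset.mem_union_left _ (Finset.mem_union_left _
          (Finset.mem_image_of_mem Prod.fst hbT''))
    apply Finset.Subset.antisymm
    · -- T' ⊆ T
      intro a ha
      refine Finset.mem_filter.2 ⟨hsub ha, ?_⟩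
      exact hreachT' a.2 (Finset.mem_union_left _ (Finset.mem_union_right _
        (Finset.mem_image_of_mem Prod.snd ha)))
    · -- T ⊆ T'
      intro a ha
      obtain ⟨haG, hr2⟩ := Finset.mem_filter.mp ha
      have hv : a.2 ∈ verts T' ∪ X := hmemT' a.2 hr2
      have haE : (a.1, a.2) ∈ E := by simpa using hG haG
      have hne : indeg T' a.2 ≠ 0 := fun h => hindegpos haE (hzero a.2 hv h)
      obtain ⟨b, hb⟩ := Finset.card_pos.mp (Nat.pos_of_ne_zero hne)
      obtain ⟨hbT', hb2⟩ := Finset.mem_filter.mp hb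
      have hbG : (b.1, a.2) ∈ G := by rw [← hb2]; simpa using hsub hbT'
      have h1 : b.1 = a.1 := hGuniq hbG (by simpa using haG)
      have : (b.1, b.2) = (a.1, a.2) := by rw [h1, hb2]
      have : b = a := by rwa [Prod.mk.eta, Prod.mk.eta] at this
      rwa [← this]
end

section
/- Let X_1, ..., X_n be i.i.d. Bernoulli(p) random variables and let Y_1, ..., Y_{cn} be arbitrary Bernoulli (0/1-valued) random variables, where c > 0 and cn is an integer. Let S_n = Σ X_i + Σ Y_i, r ≥ 0, m = max{0, p−r}, M = min{1, p+r}. If r' := p − m(1+c) ≥ 0 and r'' := M(1+c) − (p+c) ≥ 0, then P( |S_n/(n(1+c)) − p| ≥ r ) ≤ exp( −n r'² / (2p(1−p) + 2r'/3) ) + exp( −n r''² / (2p(1−p) + 2r''/3) ). -/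
/-!
Since `0 ≤ ∑ Yᵢ ≤ cn`, a deviation `|S_n/(n(1+c)) - p| ≥ r` forces `∑ Xᵢ ≤ n(p - r')` or
`∑ Xᵢ ≥ n(p + r'')`, and each of these is bounded by Bernstein's inequality for Bernoulli sums.
That inequality comes from the Chernoff bound: the power series of `exp` gives
`e^{tx} - 1 - tx ≤ x² (e^{|t|} - 1 - |t|)` for `|x| ≤ 1`, hence the centred Bernoulli
mgf is at most `exp (p(1-p)(e^{|t|} - 1 - |t|))`, and with `v = p(1-p)` the choice
`t = ε/(v + ε/3)` together with `e^t - 1 - t ≤ t²/(2(1 - t/3))` yields the exponent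
`-ε²/(2v + 2ε/3)`.
-/

open MeasureTheory ProbabilityTheory Real Finset
open scoped Nat

theorem Real.exp_sub_one_sub_eq_tsum (x : ℝ) :
    exp x - 1 - x = ∑' k : ℕ, x ^ (k + 2) / (k + 2)! := by
  have hs : Summable fun k : ℕ => x ^ k / k ! := Real.summable_pow_div_factorial x
  have hexp : exp x = ∑' k : ℕ, x ^ k / k ! := by
    rw [Real.exp_eq_exp_ℝ, NormedSpace.exp_eq_tsum_div]
  rw [hexp, hs.tsum_eq_zero_add,
    ((summable_nat_add_iff 1).2 hs).tsum_eq_zero_add]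
  simp [Nat.factorial]

theorem Real.summable_pow_add_two_div_factorial (x : ℝ) :
    Summable fun k : ℕ => x ^ (k + 2) / (k + 2)! :=
  (summable_nat_add_iff 2).2 (Real.summable_pow_div_factorial x)

theorem Nat.two_mul_three_pow_le_factorial_add_two (k : ℕ) : 2 * 3 ^ k ≤ (k + 2)! := by
  induction k with
  | zero => simp [Nat.factorial]
  | succ k ih =>
    rw [Nat.factorial_succ, pow_succ]
    nlinarith

theorem Real.exp_sub_one_sub_le_of_lt_three {t : ℝ} (h0 : 0 ≤ t) (h3 : t < 3) :
    exp t - 1 - t ≤ t ^ 2 / (2 * (1 - t / 3)) := by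
  have hterm (k : ℕ) : t ^ (k + 2) / (k + 2)! ≤ t ^ 2 / 2 * (t / 3) ^ k := by
    have hfact : (2 * 3 ^ k : ℝ) ≤ (k + 2)! := by
      exact_mod_cast Nat.two_mul_three_pow_le_factorial_add_two k
    rw [div_pow, div_le_iff₀ (by positivity)]
    calc t ^ (k + 2) = t ^ 2 / 2 * (t ^ k / 3 ^ k) * (2 * 3 ^ k) := by field_simp; ring
      _ ≤ t ^ 2 / 2 * (t ^ k / 3 ^ k) * (k + 2)! := by gcongr
  have hgeo : Summable fun k : ℕ => t ^ 2 / 2 * (t / 3) ^ k :=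
    (summable_geometric_of_lt_one (by positivity) (by linarith)).mul_left _
  rw [exp_sub_one_sub_eq_tsum]
  calc ∑' k : ℕ, t ^ (k + 2) / (k + 2)! ≤ ∑' k : ℕ, t ^ 2 / 2 * (t / 3) ^ k :=
        (summable_pow_add_two_div_factorial t).tsum_le_tsum hterm hgeo
    _ = t ^ 2 / (2 * (1 - t / 3)) := by
        rw [tsum_mul_left, tsum_geometric_of_lt_one (by positivity) (by linarith)]
        field_simp

theorem Real.exp_mul_sub_one_sub_le {x : ℝ} (hx : |x| ≤ 1) (t : ℝ) :
    exp (t * x) - 1 - t * x ≤ x ^ 2 * (exp |t| - 1 - |t|) := by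
  have hterm (k : ℕ) : (t * x) ^ (k + 2) / (k + 2)! ≤ x ^ 2 * (|t| ^ (k + 2) / (k + 2)!) := by
    have hpow : |x| ^ (k + 2) ≤ x ^ 2 := by
      rw [← sq_abs x, pow_add]
      exact mul_le_of_le_one_left (by positivity) (pow_le_one₀ (abs_nonneg x) hx)
    calc (t * x) ^ (k + 2) / (k + 2)! ≤ |t * x| ^ (k + 2) / (k + 2)! :=
          div_le_div_of_nonneg_right ((le_abs_self _).trans_eq (abs_pow _ _)) (by positivity)
      _ = |x| ^ (k + 2) * (|t| ^ (k + 2) / (k + 2)!) := by rw [abs_mul]; ring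
      _ ≤ x ^ 2 * (|t| ^ (k + 2) / (k + 2)!) := by gcongr
  rw [exp_sub_one_sub_eq_tsum, exp_sub_one_sub_eq_tsum, ← tsum_mul_left]
  exact (summable_pow_add_two_div_factorial _).tsum_le_tsum hterm
    ((summable_pow_add_two_div_factorial _).mul_left _)

theorem one_add_exp_sub_one_mul_le {p : ℝ} (hp0 : 0 ≤ p) (hp1 : p ≤ 1) (t : ℝ) :
    1 + (exp t - 1) * p ≤ exp (t * p + p * (1 - p) * (exp |t| - 1 - |t|)) := by
  set g := exp |t| - 1 - |t|
  have hlow := exp_mul_sub_one_sub_le (x := -p) (by rw [abs_neg, abs_of_nonneg hp0]; exact hp1) t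
  have hhigh := exp_mul_sub_one_sub_le (x := 1 - p)
    (by rw [abs_of_nonneg (by linarith)]; linarith) t
  have hcentered : (1 - p) * exp (t * -p) + p * exp (t * (1 - p)) ≤ exp (p * (1 - p) * g) := by
    have := add_one_le_exp (p * (1 - p) * g)
    nlinarith [mul_le_mul_of_nonneg_left hlow (by linarith : 0 ≤ 1 - p),
      mul_le_mul_of_nonneg_left hhigh hp0]
  have hcancel : exp (t * p) * exp (t * -p) = 1 := by rw [← exp_add]; ring_nf; exact exp_zero
  have hshift : exp (t * p) * exp (t * (1 - p)) = exp t := by rw [← exp_add]; ring_nf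
  calc 1 + (exp t - 1) * p = exp (t * p) * ((1 - p) * exp (t * -p) + p * exp (t * (1 - p))) := by
        linear_combination (1 - p) * hcancel.symm + p * hshift.symm
    _ ≤ exp (t * p) * exp (p * (1 - p) * g) := by gcongr
    _ = exp (t * p + p * (1 - p) * g) := (exp_add _ _).symm

theorem exists_bernstein_exponent_le {v ε : ℝ} (hv : 0 ≤ v) (hε : 0 ≤ ε) :
    ∃ t, 0 ≤ t ∧ v * (exp t - 1 - t) - t * ε ≤ -ε ^ 2 / (2 * v + 2 * ε / 3) := by
  rcases hv.eq_or_lt with rfl | hv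
  · refine ⟨3 / 2, by norm_num, ?_⟩
    rcases hε.eq_or_lt with rfl | hε
    · simp
    · rw [le_div_iff₀ (by positivity)]
      nlinarith
  set D := v + ε / 3
  have hD : 0 < D := by positivity
  refine ⟨ε / D, by positivity, ?_⟩
  have hbound := exp_sub_one_sub_le_of_lt_three (t := ε / D) (by positivity)
    (by rw [div_lt_iff₀ hD]; simp only [D]; linarith)
  have h1 : 1 - ε / D / 3 = v / D := by field_simp; ring
  rw [h1] at hbound
  calc v * (exp (ε / D) - 1 - ε / D) - ε / D * ε
      ≤ v * ((ε / D) ^ 2 / (2 * (v / D))) - ε / D * ε := by gcongr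
    _ = -ε ^ 2 / (2 * v + 2 * ε / 3) := by field_simp; ring

theorem exp_mul_eq_of_zero_or_one {Ω : Type*} {X : Ω → ℝ} (hX : ∀ ω, X ω = 0 ∨ X ω = 1)
    (t : ℝ) :
    (fun ω => exp (t * X ω)) = fun ω => 1 + (exp t - 1) * {ω | X ω = 1}.indicator 1 ω := by
  ext ω
  rcases hX ω with h | h <;> simp [h]

section ZeroOne

variable {Ω : Type*} [MeasurableSpace Ω] {μ : Measure Ω} [IsProbabilityMeasure μ]
  {X : Ω → ℝ}

theorem integrable_exp_mul_of_zero_or_one (hXm : Measurable X) (hX : ∀ ω, X ω = 0 ∨ X ω = 1)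
    (t : ℝ) : Integrable (fun ω => exp (t * X ω)) μ := by
  rw [exp_mul_eq_of_zero_or_one hX]
  exact (integrable_const 1).add
    (((integrable_const 1).indicator (hXm (measurableSet_singleton 1))).const_mul _)

theorem mgf_eq_of_zero_or_one (hXm : Measurable X) (hX : ∀ ω, X ω = 0 ∨ X ω = 1) (t : ℝ) :
    mgf X μ t = 1 + (exp t - 1) * μ.real {ω | X ω = 1} := by
  have hs : MeasurableSet {ω | X ω = 1} := hXm (measurableSet_singleton 1)
  rw [mgf, exp_mul_eq_of_zero_or_one hX, integral_add (integrable_const 1)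
    (((integrable_const 1).indicator hs).const_mul _), integral_const_mul,
    integral_indicator_one hs]
  simp

end ZeroOne

section BernoulliSum

variable {Ω ι : Type*} [MeasurableSpace Ω] {μ : Measure Ω} [IsProbabilityMeasure μ]
  {X : ι → Ω → ℝ} {p : ℝ}

theorem mgf_sum_le_of_bernoulli (hp0 : 0 ≤ p) (hp1 : p ≤ 1)
    (hXm : ∀ i, Measurable (X i)) (hX : ∀ i ω, X i ω = 0 ∨ X i ω = 1)
    (hXp : ∀ i, μ {ω | X i ω = 1} = ENNReal.ofReal p) (hXindep : iIndepFun X μ)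
    (s : Finset ι) (t : ℝ) :
    mgf (∑ i ∈ s, X i) μ t ≤ exp (#s * (t * p + p * (1 - p) * (exp |t| - 1 - |t|))) := by
  have hmgf (i : ι) : mgf (X i) μ t = 1 + (exp t - 1) * p := by
    rw [mgf_eq_of_zero_or_one (hXm i) (hX i), measureReal_def, hXp, ENNReal.toReal_ofReal hp0]
  rw [hXindep.mgf_sum hXm, Finset.prod_congr rfl fun i _ => hmgf i, Finset.prod_const, exp_nat_mul]
  exact pow_le_pow_left₀ (by nlinarith [exp_pos t]) (one_add_exp_sub_one_mul_le hp0 hp1 t) _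

theorem exists_chernoff_sum_le_of_bernoulli (hp0 : 0 ≤ p) (hp1 : p ≤ 1)
    (hXm : ∀ i, Measurable (X i)) (hX : ∀ i ω, X i ω = 0 ∨ X i ω = 1)
    (hXp : ∀ i, μ {ω | X i ω = 1} = ENNReal.ofReal p) (hXindep : iIndepFun X μ)
    (s : Finset ι) {ε : ℝ} (hε : 0 ≤ ε) :
    ∃ t, 0 ≤ t ∧
      exp (-t * (#s * (p + ε))) * mgf (∑ i ∈ s, X i) μ t ≤
        exp (-(#s * ε ^ 2) / (2 * p * (1 - p) + 2 * ε / 3)) ∧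
      exp (- -t * (#s * (p - ε))) * mgf (∑ i ∈ s, X i) μ (-t) ≤
        exp (-(#s * ε ^ 2) / (2 * p * (1 - p) + 2 * ε / 3)) := by
  obtain ⟨t, ht, hexponent⟩ :=
    exists_bernstein_exponent_le (v := p * (1 - p)) (by nlinarith) hε
  have hbernstein : exp (#s * (p * (1 - p) * (exp t - 1 - t) - t * ε)) ≤
      exp (-(#s * ε ^ 2) / (2 * p * (1 - p) + 2 * ε / 3)) :=
    calc _ ≤ exp (#s * (-ε ^ 2 / (2 * (p * (1 - p)) + 2 * ε / 3))) := by gcongr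
      _ = _ := by ring_nf
  have hmgf := mgf_sum_le_of_bernoulli hp0 hp1 hXm hX hXp hXindep s (μ := μ)
  refine ⟨t, ht, le_trans ?_ hbernstein, le_trans ?_ hbernstein⟩
  · calc _ ≤ exp (-t * (#s * (p + ε))) *
          exp (#s * (t * p + p * (1 - p) * (exp |t| - 1 - |t|))) := by gcongr; exact hmgf t
      _ = _ := by rw [← exp_add, abs_of_nonneg ht]; ring_nf
  · calc _ ≤ exp (- -t * (#s * (p - ε))) *
          exp (#s * (-t * p + p * (1 - p) * (exp |-t| - 1 - |-t|))) := by gcongr; exact hmgf (-t)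
      _ = _ := by rw [← exp_add, abs_neg, abs_of_nonneg ht]; ring_nf

theorem measureReal_sum_ge_le_of_bernoulli (hp0 : 0 ≤ p) (hp1 : p ≤ 1)
    (hXm : ∀ i, Measurable (X i)) (hX : ∀ i ω, X i ω = 0 ∨ X i ω = 1)
    (hXp : ∀ i, μ {ω | X i ω = 1} = ENNReal.ofReal p) (hXindep : iIndepFun X μ)
    (s : Finset ι) {ε : ℝ} (hε : 0 ≤ ε) :
    μ.real {ω | #s * (p + ε) ≤ ∑ i ∈ s, X i ω} ≤
      exp (-(#s * ε ^ 2) / (2 * p * (1 - p) + 2 * ε / 3)) := by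
  obtain ⟨t, ht, hbound, -⟩ :=
    exists_chernoff_sum_le_of_bernoulli hp0 hp1 hXm hX hXp hXindep s hε
  have hchernoff := measure_ge_le_exp_mul_mgf (#s * (p + ε)) ht
    (hXindep.integrable_exp_mul_sum hXm (s := s) fun i _ =>
      integrable_exp_mul_of_zero_or_one (hXm i) (hX i) t)
  simp only [Finset.sum_apply] at hchernoff
  exact hchernoff.trans hbound

theorem measureReal_sum_le_le_of_bernoulli (hp0 : 0 ≤ p) (hp1 : p ≤ 1)
    (hXm : ∀ i, Measurable (X i)) (hX : ∀ i ω, X i ω = 0 ∨ X i ω = 1)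
    (hXp : ∀ i, μ {ω | X i ω = 1} = ENNReal.ofReal p) (hXindep : iIndepFun X μ)
    (s : Finset ι) {ε : ℝ} (hε : 0 ≤ ε) :
    μ.real {ω | ∑ i ∈ s, X i ω ≤ #s * (p - ε)} ≤
      exp (-(#s * ε ^ 2) / (2 * p * (1 - p) + 2 * ε / 3)) := by
  obtain ⟨t, ht, -, hbound⟩ :=
    exists_chernoff_sum_le_of_bernoulli hp0 hp1 hXm hX hXp hXindep s hε
  have hchernoff := measure_le_le_exp_mul_mgf (#s * (p - ε)) (neg_nonpos.2 ht)
    (hXindep.integrable_exp_mul_sum hXm (s := s) fun i _ =>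
      integrable_exp_mul_of_zero_or_one (hXm i) (hX i) (-t))
  simp only [Finset.sum_apply] at hchernoff
  exact hchernoff.trans hbound

end BernoulliSum

theorem le_or_le_of_le_abs_add_div_sub {x y a d p r m M : ℝ} (hd : 0 < d) (hy0 : 0 ≤ y)
    (hya : y ≤ a) (hm : p - r ≤ m) (hM : M ≤ p + r) (h : r ≤ |(x + y) / d - p|) :
    x ≤ m * d ∨ M * d - a ≤ x := by
  rcases le_abs.1 h with hup | hlow
  · right
    have : (p + r) * d ≤ x + y := by rw [← le_div_iff₀ hd]; linarith
    nlinarith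
  · left
    have : x + y ≤ (p - r) * d := by rw [← div_le_iff₀ hd]; linarith
    nlinarith

theorem sum_nonneg_of_zero_or_one {ι : Type*} {f : ι → ℝ} (hf : ∀ i, f i = 0 ∨ f i = 1)
    (s : Finset ι) : 0 ≤ ∑ i ∈ s, f i :=
  sum_nonneg fun i _ => by rcases hf i with h | h <;> simp [h]

theorem sum_le_card_of_zero_or_one {ι : Type*} {f : ι → ℝ} (hf : ∀ i, f i = 0 ∨ f i = 1)
    (s : Finset ι) : ∑ i ∈ s, f i ≤ #s := by
  simpa using sum_le_card_nsmul s f 1 fun i _ => by rcases hf i with h | h <;> simp [h]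

theorem stmt_5_general {Ω : Type*} [MeasurableSpace Ω] (μ : Measure Ω) [IsProbabilityMeasure μ]
    (p : ℝ) (hp0 : 0 ≤ p) (hp1 : p ≤ 1)
    (n : ℕ) (hn : 0 < n) (c : ℝ) (hc : 0 < c) (cn : ℕ) (hcn : (cn : ℝ) = c * n)
    (X : ℕ → Ω → ℝ)
    (hXmeas : ∀ i, Measurable (X i))
    (hXval : ∀ i ω, X i ω = 0 ∨ X i ω = 1)
    (hXid : ∀ i, μ {ω | X i ω = 1} = ENNReal.ofReal p)
    (hXindep : iIndepFun X μ)
    (Y : ℕ → Ω → ℝ)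
    (hYval : ∀ i ω, Y i ω = 0 ∨ Y i ω = 1)
    (r : ℝ)
    (hr' : 0 ≤ p - max 0 (p - r) * (1 + c))
    (hr'' : 0 ≤ min 1 (p + r) * (1 + c) - (p + c)) :
    (μ {ω | |((∑ i ∈ Finset.range n, X i ω) + ∑ i ∈ Finset.range cn, Y i ω)
            / (n * (1 + c)) - p| ≥ r}).toReal ≤
      Real.exp (-(n * (p - max 0 (p - r) * (1 + c)) ^ 2) /
          (2 * p * (1 - p) + 2 * (p - max 0 (p - r) * (1 + c)) / 3)) +
      Real.exp (-(n * (min 1 (p + r) * (1 + c) - (p + c)) ^ 2) /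
          (2 * p * (1 - p) + 2 * (min 1 (p + r) * (1 + c) - (p + c)) / 3)) := by
  have hd : (0 : ℝ) < n * (1 + c) := by
    have : (0 : ℝ) < n := by exact_mod_cast hn
    positivity
  have hsplit : {ω | |((∑ i ∈ Finset.range n, X i ω) + ∑ i ∈ Finset.range cn, Y i ω)
        / (n * (1 + c)) - p| ≥ r} ⊆
      {ω | ∑ i ∈ range n, X i ω ≤ #(range n) * (p - (p - max 0 (p - r) * (1 + c)))} ∪
      {ω | #(range n) * (p + (min 1 (p + r) * (1 + c) - (p + c))) ≤ ∑ i ∈ range n, X i ω} := by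
    intro ω hω
    have hY : ∑ i ∈ range cn, Y i ω ≤ c * n := by
      rw [← hcn]; simpa using sum_le_card_of_zero_or_one (hYval · ω) (range cn)
    rcases le_or_le_of_le_abs_add_div_sub hd (sum_nonneg_of_zero_or_one (hYval · ω) _) hY
      (le_max_right 0 (p - r)) (min_le_right 1 (p + r)) hω with hlow | hup
    · left
      simp only [Set.mem_ofPred_eq, card_range]
      linarith
    · right
      simp only [Set.mem_ofPred_eq, card_range]
      linarith
  calc _ ≤ μ.real (_ ∪ _) := measureReal_mono hsplit
    _ ≤ _ := measureReal_union_le _ _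
    _ ≤ _ := by
      simpa using add_le_add
        (measureReal_sum_le_le_of_bernoulli hp0 hp1 hXmeas hXval hXid hXindep (range n) hr')
        (measureReal_sum_ge_le_of_bernoulli hp0 hp1 hXmeas hXval hXid hXindep (range n) hr'')

/-- A Bernstein-type inequality for a sum of `n` i.i.d. Bernoulli(p) variables
`X₁,…,Xₙ` and `cn` arbitrary 0/1-valued variables `Y₁,…,Y_{cn}`.  With
`S_n = ∑ Xᵢ + ∑ Yᵢ`, `m = max{0, p−r}`, `M = min{1, p+r}`,
`r' = p − m(1+c) ≥ 0` and `r'' = M(1+c) − (p+c) ≥ 0`, we have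
`P( |S_n/(n(1+c)) − p| ≥ r ) ≤ exp(−n r'²/(2p(1−p)+2r'/3)) + exp(−n r''²/(2p(1−p)+2r''/3))`. -/
theorem stmt_5 {Ω : Type*} [MeasurableSpace Ω] (μ : Measure Ω) [IsProbabilityMeasure μ]
    (p : ℝ) (hp0 : 0 ≤ p) (hp1 : p ≤ 1)
    (n : ℕ) (hn : 0 < n) (c : ℝ) (hc : 0 < c) (cn : ℕ) (hcn : (cn : ℝ) = c * n)
    (X : ℕ → Ω → ℝ)
    (hXmeas : ∀ i, Measurable (X i))
    (hXval : ∀ i ω, X i ω = 0 ∨ X i ω = 1)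
    (hXid : ∀ i, μ {ω | X i ω = 1} = ENNReal.ofReal p)
    (hXindep : iIndepFun X μ)
    (Y : ℕ → Ω → ℝ)
    (hYmeas : ∀ i, Measurable (Y i))
    (hYval : ∀ i ω, Y i ω = 0 ∨ Y i ω = 1)
    (r : ℝ) (hr : 0 ≤ r)
    (hr' : 0 ≤ p - max 0 (p - r) * (1 + c))
    (hr'' : 0 ≤ min 1 (p + r) * (1 + c) - (p + c)) :
    (μ {ω | |((∑ i ∈ Finset.range n, X i ω) + ∑ i ∈ Finset.range cn, Y i ω)
            / (n * (1 + c)) - p| ≥ r}).toReal ≤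
      Real.exp (-(n * (p - max 0 (p - r) * (1 + c)) ^ 2) /
          (2 * p * (1 - p) + 2 * (p - max 0 (p - r) * (1 + c)) / 3)) +
      Real.exp (-(n * (min 1 (p + r) * (1 + c) - (p + c)) ^ 2) /
          (2 * p * (1 - p) + 2 * (min 1 (p + r) * (1 + c) - (p + c)) / 3)) :=
  stmt_5_general μ p hp0 hp1 n hn c hc cn hcn X hXmeas hXval hXid hXindep Y hYval r hr' hr''
end

section
/- Let Ω be a finite set and let T = T_1^{α_1} T_2^{α_2} ... T_m^{α_m} and S = S_1^{β_1} S_2^{β_2} ... S_n^{β_n} be two sequences in Ω of equal length l (written in run-length form with all α_i, β_j > 0, Σα_i = Σβ_j = l), satisfying: T_i ≠ T_{i+1} for all i ∈ [m−1], S_j ≠ S_{j+1} for all j ∈ [n−1], n ≤ m, and if n = m then S_i ≠ T_i for some i. Then there exists a block T_i^{α_i} of T over which T and S differ at every position; in particular the number of positions at which T and S differ is at least min{α_i : i ∈ [m]}. -/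
open Finset in
lemma flat_len {Ω : Type*} (m : ℕ) (α : ℕ → ℕ) (T : ℕ → Ω) :
    ((List.ofFn fun i : Fin m => List.replicate (α i) (T i)).flatten).length
      = ∑ i ∈ Finset.range m, α i := by
  simp [List.length_flatten, Function.comp, List.sum_ofFn, Fin.sum_univ_eq_sum_range]

open Finset in
lemma getflat {Ω : Type*} : ∀ (m : ℕ) (α : ℕ → ℕ) (T : ℕ → Ω) (i : ℕ), i < m → ∀ k,
    ∑ j ∈ Finset.range i, α j ≤ k → k < ∑ j ∈ Finset.range (i+1), α j →
    ((List.ofFn fun i : Fin m => List.replicate (α i) (T i)).flatten)[k]? = some (T i) := by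
  intro m
  induction m with
  | zero => omega
  | succ m ih =>
    intro α T i hi k h1 h2
    rw [List.ofFn_succ, List.flatten_cons]
    rcases i with _ | i
    · rw [List.getElem?_append_left]
      · simp at h2 ⊢
        rw [List.getElem?_replicate]
        simp [h2]
      · simpa using by simpa using h2
    · have hα0 : α 0 ≤ k := by
        have : α 0 ≤ ∑ j ∈ Finset.range (i+1), α j := by
          apply Finset.single_le_sum (f := α) (fun _ _ => Nat.zero_le _)
          simp
        omega
      have e1 := Finset.sum_range_succ' α i
      have e2 := Finset.sum_range_succ' α (i+1)
      rw [List.getElem?_append_right (by simpa using hα0)]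
      simp only [List.length_replicate]
      have := ih (fun j => α (j+1)) (fun j => T (j+1)) i (by omega) (k - α 0)
        (by show ∑ j ∈ Finset.range i, α (j+1) ≤ k - α 0; omega)
        (by show k - α 0 < ∑ j ∈ Finset.range (i+1), α (j+1); omega)
      simpa using this

open Finset in
lemma exists_block : ∀ (m : ℕ) (α : ℕ → ℕ) (k : ℕ), k < ∑ j ∈ Finset.range m, α j →
    ∃ i < m, ∑ j ∈ Finset.range i, α j ≤ k ∧ k < ∑ j ∈ Finset.range (i+1), α j := by
  intro m
  induction m with
  | zero => simp
  | succ m ih =>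
    intro α k hk
    by_cases h : k < ∑ j ∈ Finset.range m, α j
    · obtain ⟨i, hi, h1, h2⟩ := ih α k h
      exact ⟨i, by omega, h1, h2⟩
    · exact ⟨m, by omega, by omega, hk⟩

/-- Let `t = T₁^{α₁} … T_m^{α_m}` and `s = S₁^{β₁} … S_n^{β_n}` be run-length encoded
sequences over a finite set `Ω` of equal total length `l`, with all run lengths
positive, adjacent run values distinct, `n ≤ m`, and — if `n = m` — `Sᵢ ≠ Tᵢ` for some
`i`.  Then there is a block `Tᵢ^{αᵢ}` of `t` over which `t` and `s` differ at every
position; in particular the number of positions where they differ is at least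
`min {αᵢ : i < m}`. -/
theorem stmt_7 {Ω : Type*} [Fintype Ω] [DecidableEq Ω]
    (l m n : ℕ) (hm : 0 < m)
    (α β : ℕ → ℕ) (T S : ℕ → Ω)
    (hα : ∀ i < m, 0 < α i) (hβ : ∀ j < n, 0 < β j)
    (hαsum : ∑ i ∈ Finset.range m, α i = l)
    (hβsum : ∑ j ∈ Finset.range n, β j = l)
    (hT : ∀ i, i + 1 < m → T i ≠ T (i + 1))
    (hS : ∀ j, j + 1 < n → S j ≠ S (j + 1))
    (hnm : n ≤ m)
    (hne : n = m → ∃ i < m, S i ≠ T i) :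
    let t := (List.ofFn fun i : Fin m => List.replicate (α i) (T i)).flatten
    let s := (List.ofFn fun j : Fin n => List.replicate (β j) (S j)).flatten
    (∃ i < m, ∀ k, (∑ j ∈ Finset.range i, α j) ≤ k →
        k < ∑ j ∈ Finset.range (i + 1), α j → t[k]? ≠ s[k]?) ∧
    (Finset.range m).inf' ⟨0, Finset.mem_range.mpr hm⟩ α ≤
      ((Finset.range l).filter fun k => t[k]? ≠ s[k]?).card := by
  intro t s
  have sum_mono : ∀ (γ : ℕ → ℕ) (a b : ℕ), a ≤ b →
      ∑ j ∈ Finset.range a, γ j ≤ ∑ j ∈ Finset.range b, γ j := fun γ a b h =>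
    Finset.sum_le_sum_of_subset (Finset.range_subset_range.mpr h)
  have main : ∃ i < m, ∀ k, (∑ j ∈ Finset.range i, α j) ≤ k →
      k < ∑ j ∈ Finset.range (i + 1), α j → t[k]? ≠ s[k]? := by
    by_contra hcon
    push_neg at hcon
    choose kk hk1 hk2 hk3 using hcon
    -- for each i < m, find block f i of s containing kk i
    have hkl : ∀ i (hi : i < m), kk i hi < l := by
      intro i hi
      have := sum_mono α (i+1) m hi
      have := hk2 i hi
      omega
    have hblock : ∀ i (hi : i < m), ∃ j < n,
        ∑ p ∈ Finset.range j, β p ≤ kk i hi ∧ kk i hi < ∑ p ∈ Finset.range (j+1), β p := by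
      intro i hi
      exact exists_block n β _ (by rw [hβsum]; exact hkl i hi)
    choose f hf1 hf2 hf3 using hblock
    have hTS : ∀ i (hi : i < m), S (f i hi) = T i := by
      intro i hi
      have ht : t[kk i hi]? = some (T i) := getflat m α T i hi _ (hk1 i hi) (hk2 i hi)
      have hs : s[kk i hi]? = some (S (f i hi)) :=
        getflat n β S _ (hf1 i hi) _ (hf2 i hi) (hf3 i hi)
      have := hk3 i hi
      rw [ht, hs] at this
      exact (Option.some_inj.mp this).symm
    -- f is strictly increasing in steps
    have hstep : ∀ i (hi : i + 1 < m), f i (by omega) < f (i+1) hi := by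
      intro i hi
      have hkmono : kk i (by omega) < kk (i+1) hi := by
        have h1 := hk2 i (by omega)
        have h2 := hk1 (i+1) hi
        omega
      have hle : f i (by omega) ≤ f (i+1) hi := by
        by_contra hlt
        push_neg at hlt
        have := sum_mono β (f (i+1) hi + 1) (f i (by omega)) (by omega)
        have := hf3 (i+1) hi
        have := hf2 i (by omega)
        omega
      rcases Nat.lt_or_ge (f i (by omega)) (f (i+1) hi) with h | h
      · exact h
      · exfalso
        have heq : f i (by omega) = f (i+1) hi := by omega
        apply hT i hi
        rw [← hTS i (by omega), ← hTS (i+1) hi, heq]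
    have hge : ∀ d a b (ha : a < m) (hb : b < m), b = a + d → f a ha + d ≤ f b hb := by
      intro d
      induction d with
      | zero =>
        intro a b ha hb hab
        subst hab
        exact Nat.le_refl _
      | succ d ihd =>
        intro a b ha hb hab
        subst hab
        have h1 := ihd a (a + d) ha (by omega) rfl
        have h2 := hstep (a + d) (by omega)
        have he : f (a + (d + 1)) hb = f (a + d + 1) (by omega) := rfl
        rw [he]
        omega
    -- n = m
    have hnem : n = m := by
      have h1 := hge (m - 1) 0 (m - 1) hm (by omega) (by omega)
      have h2 := hf1 (m - 1) (by omega)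
      omega
    obtain ⟨i0, hi0, hne'⟩ := hne hnem
    apply hne'
    have hle1 : i0 ≤ f i0 hi0 := by
      have := hge i0 0 i0 hm hi0 (by omega)
      omega
    have hle2 : f i0 hi0 ≤ i0 := by
      have h1 := hge (m - 1 - i0) i0 (m - 1) hi0 (by omega) (by omega)
      have h2 := hf1 (m - 1) (by omega)
      omega
    have heq : f i0 hi0 = i0 := by omega
    have := hTS i0 hi0
    rw [heq] at this
    exact this
  refine ⟨main, ?_⟩
  obtain ⟨i, hi, hdiff⟩ := main
  have hsub : Finset.Ico (∑ j ∈ Finset.range i, α j) (∑ j ∈ Finset.range (i+1), α j) ⊆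
      (Finset.range l).filter fun k => t[k]? ≠ s[k]? := by
    intro k hk
    rw [Finset.mem_Ico] at hk
    rw [Finset.mem_filter, Finset.mem_range]
    refine ⟨?_, hdiff k hk.1 hk.2⟩
    have := sum_mono α (i+1) m hi
    omega
  have hcard : α i ≤ ((Finset.range l).filter fun k => t[k]? ≠ s[k]?).card := by
    have := Finset.card_le_card hsub
    rw [Nat.card_Ico] at this
    have hs := Finset.sum_range_succ α i
    omega
  exact le_trans (Finset.inf'_le α (Finset.mem_range.mpr hi)) hcard
end

section
/- If the run-length sequences T = T_1^{α_1}...T_m^{α_m} and S = S_1^{β_1}...S_n^{β_n} (with T_i ≠ T_{i+1}, S_j ≠ S_{j+1}, all run lengths positive, equal total length) agree in at least one position within every block of T, then T_1, T_2, ..., T_m is a subsequence of S_1, S_2, ..., S_n; in particular n ≥ m. -/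
/-!
Pick, in every run `i` of `T`, a position `kᵢ` where `T` and `S` agree, and let `J i` be the
run of `S` containing `kᵢ`, so that `T i = S (J i)`. The positions `kᵢ` increase with `i`,
hence so do the runs `J i`; and `J i ≠ J (i + 1)` because `T i ≠ T (i + 1)`. Thus `J` is
strictly increasing and exhibits `T₀, …, T_{m-1}` as a subsequence of `S₀, …, S_{n-1}`.
-/

open Finset

namespace RunLength

variable {Ω : Type*}

def decode (β : ℕ → ℕ) (S : ℕ → Ω) (n : ℕ) : List Ω :=
  (List.ofFn fun j : Fin n => List.replicate (β j) (S j)).flatten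

def block (β : ℕ → ℕ) (j : ℕ) : Finset ℕ :=
  Ico (∑ i ∈ range j, β i) (∑ i ∈ range (j + 1), β i)

theorem lt_of_mem_block_of_lt {β : ℕ → ℕ} {j j' k k' : ℕ} (hjj' : j < j')
    (hk : k ∈ block β j) (hk' : k' ∈ block β j') : k < k' := by
  have hsum : ∑ i ∈ range (j + 1), β i ≤ ∑ i ∈ range j', β i :=
    sum_le_sum_of_subset (range_subset_range.2 hjj')
  simp only [block, mem_Ico] at hk hk'
  omega

theorem lt_sum_of_mem_block {β : ℕ → ℕ} {j n k : ℕ} (hj : j < n) (hk : k ∈ block β j) :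
    k < ∑ i ∈ range n, β i :=
  (mem_Ico.1 hk).2.trans_le (sum_le_sum_of_subset (range_subset_range.2 hj))

theorem exists_mem_block (β : ℕ → ℕ) {n k : ℕ} (hk : k < ∑ i ∈ range n, β i) :
    ∃ j < n, k ∈ block β j := by
  induction n with
  | zero => simp at hk
  | succ n ih =>
    by_cases hkn : k < ∑ i ∈ range n, β i
    · obtain ⟨j, hj, hkj⟩ := ih hkn
      exact ⟨j, hj.trans (Nat.lt_succ_self n), hkj⟩
    · exact ⟨n, Nat.lt_succ_self n, mem_Ico.2 ⟨not_lt.1 hkn, hk⟩⟩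

@[simp]
theorem length_decode (β : ℕ → ℕ) (S : ℕ → Ω) (n : ℕ) :
    (decode β S n).length = ∑ i ∈ range n, β i := by
  simp [decode, List.length_flatten, List.sum_ofFn, Fin.sum_univ_eq_sum_range]

theorem getElem?_decode_of_mem_block (β : ℕ → ℕ) (S : ℕ → Ω) {n j k : ℕ} (hj : j < n)
    (hk : k ∈ block β j) : (decode β S n)[k]? = some (S j) := by
  induction n with
  | zero => simp at hj
  | succ n ih =>
    have hsplit : decode β S (n + 1) = decode β S n ++ List.replicate (β n) (S n) := by
      simp only [decode, List.ofFn_succ', List.concat_eq_append, List.flatten_concat]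
      rfl
    rw [hsplit]
    rcases (Nat.lt_succ_iff_lt_or_eq.1 hj) with hjn | rfl
    · rw [List.getElem?_append_left (by simpa using lt_sum_of_mem_block hjn hk), ih hjn]
    · simp only [block, mem_Ico, sum_range_succ] at hk
      rw [List.getElem?_append_right (by simpa using hk.1), List.getElem?_replicate,
        if_pos (by simp; omega)]

end RunLength

theorem List.map_range_sublist_map_range {α : Type*} {m n : ℕ} {J : ℕ → ℕ} {T S : ℕ → α}
    (hJ : StrictMonoOn J (Set.Iio m)) (hJn : ∀ i < m, J i < n) (hTS : ∀ i < m, T i = S (J i)) :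
    ((List.range m).map T).Sublist ((List.range n).map S) := by
  have hmap : (List.range m).map T = ((List.range m).map J).map S := by
    simp +contextual [List.map_map, List.map_inj_left, hTS]
  have hsorted : ((List.range m).map J).Pairwise (· < ·) :=
    List.pairwise_map.2 <| List.pairwise_lt_range.imp_of_mem fun ha hb hab =>
      hJ (List.mem_range.1 ha) (List.mem_range.1 hb) hab
  have hsub : (List.range m).map J ⊆ List.range n := by
    simpa [List.subset_def] using hJn
  rw [hmap]
  exact (List.sublist_of_subperm_of_pairwise (List.subperm_of_subset hsorted.nodup hsub) hsorted
    List.pairwise_lt_range).map S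

open RunLength in
theorem stmt_8_general {Ω : Type*}
    (l m n : ℕ)
    (α β : ℕ → ℕ) (T S : ℕ → Ω)
    (hαsum : ∑ i ∈ Finset.range m, α i = l)
    (hβsum : ∑ j ∈ Finset.range n, β j = l)
    (hT : ∀ i, i + 1 < m → T i ≠ T (i + 1))
    (hagree : ∀ i < m, ∃ k, (∑ j ∈ Finset.range i, α j) ≤ k ∧
        k < (∑ j ∈ Finset.range (i + 1), α j) ∧
        ((List.ofFn fun i' : Fin m => List.replicate (α i') (T i')).flatten)[k]? =
        ((List.ofFn fun j' : Fin n => List.replicate (β j') (S j')).flatten)[k]?) :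
    ((List.range m).map T).Sublist ((List.range n).map S) ∧ m ≤ n := by
  have hmatch : ∀ i < m, ∃ j < n, ∃ k ∈ block α i, k ∈ block β j ∧ T i = S j := by
    intro i hi
    obtain ⟨k, hk₁, hk₂, hk⟩ := hagree i hi
    have hkα : k ∈ block α i := mem_Ico.2 ⟨hk₁, hk₂⟩
    obtain ⟨j, hj, hkβ⟩ := exists_mem_block β (k := k) (by
      rw [hβsum, ← hαsum]; exact lt_sum_of_mem_block hi hkα)
    change (decode α T m)[k]? = (decode β S n)[k]? at hk
    rw [getElem?_decode_of_mem_block α T hi hkα, getElem?_decode_of_mem_block β S hj hkβ] at hk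
    exact ⟨j, hj, k, hkα, hkβ, Option.some_injective _ hk⟩
  choose! J hJn K hKα hKβ hTS using hmatch
  have hJ : StrictMonoOn J (Set.Iio m) := by
    refine strictMonoOn_of_lt_add_one Set.ordConnected_Iio fun i _ hi hi' => ?_
    have hK : K i < K (i + 1) := lt_of_mem_block_of_lt (lt_add_one i) (hKα i hi) (hKα _ hi')
    have hle : J i ≤ J (i + 1) := not_lt.1 fun h =>
      hK.not_gt (lt_of_mem_block_of_lt h (hKβ _ hi') (hKβ i hi))
    exact hle.lt_of_ne fun h => hT i hi' (by rw [hTS i hi, hTS _ hi', h])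
  have hsub := List.map_range_sublist_map_range hJ hJn hTS
  exact ⟨hsub, by simpa using hsub.length_le⟩

/-- If the run-length sequences `t = T₁^{α₁}…T_m^{α_m}` and `s = S₁^{β₁}…S_n^{β_n}`
(adjacent run values distinct, all run lengths positive, equal total length `l`)
agree at at least one position inside every block of `t`, then `T₁, …, T_m` is a
subsequence of `S₁, …, S_n`; in particular `m ≤ n`. -/
theorem stmt_8 {Ω : Type*} [Fintype Ω] [DecidableEq Ω]
    (l m n : ℕ)
    (α β : ℕ → ℕ) (T S : ℕ → Ω)
    (hα : ∀ i < m, 0 < α i) (hβ : ∀ j < n, 0 < β j)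
    (hαsum : ∑ i ∈ Finset.range m, α i = l)
    (hβsum : ∑ j ∈ Finset.range n, β j = l)
    (hT : ∀ i, i + 1 < m → T i ≠ T (i + 1))
    (hS : ∀ j, j + 1 < n → S j ≠ S (j + 1))
    (hagree : ∀ i < m, ∃ k, (∑ j ∈ Finset.range i, α j) ≤ k ∧
        k < (∑ j ∈ Finset.range (i + 1), α j) ∧
        ((List.ofFn fun i' : Fin m => List.replicate (α i') (T i')).flatten)[k]? =
        ((List.ofFn fun j' : Fin n => List.replicate (β j') (S j')).flatten)[k]?) :
    ((List.range m).map T).Sublist ((List.range n).map S) ∧ m ≤ n :=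
  stmt_8_general l m n α β T S hαsum hβsum hT hagree
end

section
/- In Model R, if extant individuals i and j in a diploid pedigree of depth 2 have distinct pairs of parents and exactly one pair of grandparents in common, then the probability that their sequences agree at a fixed site equals 1/8 + 7/(8|Σ|); and if they share no parents or grandparents it equals 1/|Σ|. Consequently, for |Σ| ≥ 2, the four possible relationships (same parents; same grandparents; one shared grandparent pair; unrelated) yield four pairwise distinct agreement probabilities 1/2 + 1/(2|Σ|), 1/4 + 3/(4|Σ|), 1/8 + 7/(8|Σ|), and 1/|Σ|. -/
lemma filter_eq_card' {σ : Type*} [Fintype σ] [DecidableEq σ] {m : ℕ} (i j : Fin m) (h : i ≠ j) :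
    (Finset.univ.filter fun f : Fin m → σ => f i = f j).card = Fintype.card σ ^ (m - 1) := by
  rw [← Fintype.card_subtype]
  have e : {f : Fin m → σ // f i = f j} ≃ ({k : Fin m // k ≠ j} → σ) :=
    { toFun := fun f k => f.1 k.1
      invFun := fun g => ⟨fun k => if hk : k = j then g ⟨i, h⟩ else g ⟨k, hk⟩, by simp [h]⟩
      left_inv := fun f => by
        ext k
        by_cases hk : k = j
        · simp only [hk, dif_pos]
          exact f.2.symm ▸ rfl
        · simp [hk]
      right_inv := fun g => by
        ext k
        have hk : (k : Fin m) ≠ j := k.2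
        simp [hk] }
  rw [Fintype.card_congr e, Fintype.card_fun]
  congr 1
  have : Fintype.card {k : Fin m // k ≠ j}
      = Fintype.card (Fin m) - Fintype.card {k : Fin m // k = j} := by
    simpa using Fintype.card_subtype_compl (fun k : Fin m => k = j)
  rw [this, Fintype.card_subtype_eq, Fintype.card_fin]

lemma split_card' {σ : Type*} [Fintype σ] [DecidableEq σ] {m : ℕ}
    (I J : Fin 4 × Fin 4 → Fin m) :
    (Finset.univ.filter fun x : (Fin m → σ) × Fin 4 × Fin 4 =>
        x.1 (I x.2) = x.1 (J x.2)).card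
      = ∑ y : Fin 4 × Fin 4,
          (Finset.univ.filter fun f : Fin m → σ => f (I y) = f (J y)).card := by
  rw [Finset.card_filter, Fintype.sum_prod_type_right]
  exact Finset.sum_congr rfl fun y _ => by rw [Finset.card_filter]

lemma count_main' {σ : Type*} [Fintype σ] [DecidableEq σ] {m : ℕ}
    (I J : Fin 4 × Fin 4 → Fin m) :
    (Finset.univ.filter fun x : (Fin m → σ) × Fin 4 × Fin 4 =>
        x.1 (I x.2) = x.1 (J x.2)).card
      = (Finset.univ.filter fun y : Fin 4 × Fin 4 => I y = J y).card * Fintype.card σ ^ m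
        + (Finset.univ.filter fun y : Fin 4 × Fin 4 => ¬ I y = J y).card
            * Fintype.card σ ^ (m - 1) := by
  rw [split_card']
  have : ∀ y : Fin 4 × Fin 4,
      (Finset.univ.filter fun f : Fin m → σ => f (I y) = f (J y)).card
        = if I y = J y then Fintype.card σ ^ m else Fintype.card σ ^ (m - 1) := by
    intro y
    by_cases h : I y = J y
    · simp [h, Finset.filter_true_of_mem, Fintype.card_fun]
    · rw [if_neg h, filter_eq_card' _ _ h]
  simp_rw [this]
  rw [Finset.sum_ite, Finset.sum_const, Finset.sum_const, smul_eq_mul, smul_eq_mul]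

lemma cA1 : (Finset.univ.filter fun y : Fin 4 × Fin 4 =>
    ((⟨y.1.val, by have := y.1.isLt; omega⟩ : Fin 6)
      = (⟨y.2.val + 2, by have := y.2.isLt; omega⟩ : Fin 6))).card = 2 := by decide

lemma cA2 : (Finset.univ.filter fun y : Fin 4 × Fin 4 =>
    ¬ ((⟨y.1.val, by have := y.1.isLt; omega⟩ : Fin 6)
      = (⟨y.2.val + 2, by have := y.2.isLt; omega⟩ : Fin 6))).card = 14 := by decide

lemma cB1 : (Finset.univ.filter fun y : Fin 4 × Fin 4 =>
    ((⟨y.1.val, by have := y.1.isLt; omega⟩ : Fin 8)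
      = (⟨y.2.val + 4, by have := y.2.isLt; omega⟩ : Fin 8))).card = 0 := by decide

lemma cB2 : (Finset.univ.filter fun y : Fin 4 × Fin 4 =>
    ¬ ((⟨y.1.val, by have := y.1.isLt; omega⟩ : Fin 8)
      = (⟨y.2.val + 4, by have := y.2.isLt; omega⟩ : Fin 8))).card = 16 := by decide

/-- Model R, depth-2 diploid pedigrees.  If `i` and `j` have distinct pairs of parents
and exactly one pair of grandparents in common, the site agreement probability is
`1/8 + 7/(8|Σ|)` (here there are 6 founders; `i` traces uniformly to founders `0..3`,
`j` to founders `2..5`).  If they share no parents or grandparents (8 founders; `i`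
traces to `0..3`, `j` to `4..7`) it is `1/|Σ|`.  Consequently, for `|Σ| ≥ 2` the four
agreement probabilities `1/2 + 1/(2|Σ|)`, `1/4 + 3/(4|Σ|)`, `1/8 + 7/(8|Σ|)`, `1/|Σ|`
of the four possible relationships are pairwise distinct. -/
theorem stmt_14 {σ : Type*} [Fintype σ] [DecidableEq σ] [Nonempty σ]
    (hcard : 2 ≤ Fintype.card σ) :
    ((((Finset.univ.filter fun x : (Fin 6 → σ) × Fin 4 × Fin 4 =>
        x.1 ⟨x.2.1.val, by have := x.2.1.isLt; omega⟩ =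
        x.1 ⟨x.2.2.val + 2, by have := x.2.2.isLt; omega⟩).card : ℝ)
      / (Fintype.card ((Fin 6 → σ) × Fin 4 × Fin 4)))
      = 1 / 8 + 7 / (8 * Fintype.card σ)) ∧
    ((((Finset.univ.filter fun x : (Fin 8 → σ) × Fin 4 × Fin 4 =>
        x.1 ⟨x.2.1.val, by have := x.2.1.isLt; omega⟩ =
        x.1 ⟨x.2.2.val + 4, by have := x.2.2.isLt; omega⟩).card : ℝ)
      / (Fintype.card ((Fin 8 → σ) × Fin 4 × Fin 4)))
      = 1 / Fintype.card σ) ∧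
    List.Pairwise (· ≠ ·)
      [(1 / 2 + 1 / (2 * Fintype.card σ) : ℝ), 1 / 4 + 3 / (4 * Fintype.card σ),
        1 / 8 + 7 / (8 * Fintype.card σ), 1 / Fintype.card σ] := by
  set n := Fintype.card σ with hn
  have hn0 : (0 : ℝ) < (n : ℝ) := by positivity
  have hne : (n : ℝ) ≠ 0 := ne_of_gt hn0
  have hn2 : (2 : ℝ) ≤ (n : ℝ) := by exact_mod_cast hcard
  refine ⟨?_, ?_, ?_⟩
  · have h1 : ((Finset.univ.filter fun x : (Fin 6 → σ) × Fin 4 × Fin 4 =>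
        x.1 ⟨x.2.1.val, by have := x.2.1.isLt; omega⟩ =
        x.1 ⟨x.2.2.val + 2, by have := x.2.2.isLt; omega⟩).card)
        = 2 * n ^ 6 + 14 * n ^ 5 := by
      have key := count_main' (σ := σ)
        (fun y : Fin 4 × Fin 4 => (⟨y.1.val, by have := y.1.isLt; omega⟩ : Fin 6))
        (fun y : Fin 4 × Fin 4 => (⟨y.2.val + 2, by have := y.2.isLt; omega⟩ : Fin 6))
      rw [cA1, cA2] at key
      exact key
    rw [h1]
    have hc : (Fintype.card ((Fin 6 → σ) × Fin 4 × Fin 4)) = 16 * n ^ 6 := by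
      simp [Fintype.card_fun]; ring
    rw [hc]
    push_cast
    field_simp
    ring
  · have h2 : ((Finset.univ.filter fun x : (Fin 8 → σ) × Fin 4 × Fin 4 =>
        x.1 ⟨x.2.1.val, by have := x.2.1.isLt; omega⟩ =
        x.1 ⟨x.2.2.val + 4, by have := x.2.2.isLt; omega⟩).card)
        = 16 * n ^ 7 := by
      have key := count_main' (σ := σ)
        (fun y : Fin 4 × Fin 4 => (⟨y.1.val, by have := y.1.isLt; omega⟩ : Fin 8))
        (fun y : Fin 4 × Fin 4 => (⟨y.2.val + 4, by have := y.2.isLt; omega⟩ : Fin 8))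
      rw [cB1, cB2] at key
      simpa using key
    rw [h2]
    have hc : (Fintype.card ((Fin 8 → σ) × Fin 4 × Fin 4)) = 16 * n ^ 8 := by
      simp [Fintype.card_fun]; ring
    rw [hc]
    push_cast
    field_simp
  · have hu2 : (1 : ℝ) / n ≤ 1 / 2 := by
      rw [div_le_div_iff₀ hn0 (by norm_num)]; linarith
    have b1 : (1 : ℝ) / (2 * n) = (1 / n) / 2 := by ring
    have b2 : (3 : ℝ) / (4 * n) = 3 * (1 / n) / 4 := by ring
    have b3 : (7 : ℝ) / (8 * n) = 7 * (1 / n) / 8 := by ring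
    have h12 : (1 : ℝ) / 4 + 3 / (4 * n) < 1 / 2 + 1 / (2 * n) := by linarith
    have h23 : (1 : ℝ) / 8 + 7 / (8 * n) < 1 / 4 + 3 / (4 * n) := by linarith
    have h34 : (1 : ℝ) / n < 1 / 8 + 7 / (8 * n) := by linarith
    refine List.Pairwise.cons ?_ (List.Pairwise.cons ?_
      (List.Pairwise.cons ?_ (List.pairwise_singleton _ _)))
    · intro b hb
      simp only [List.mem_cons, List.not_mem_nil, or_false] at hb
      rcases hb with rfl | rfl | rfl
      · exact ne_of_gt h12
      · exact ne_of_gt (lt_trans h23 h12)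
      · exact ne_of_gt (lt_trans h34 (lt_trans h23 h12))
    · intro b hb
      simp only [List.mem_cons, List.not_mem_nil, or_false] at hb
      rcases hb with rfl | rfl
      · exact ne_of_gt h23
      · exact ne_of_gt (lt_trans h34 h23)
    · intro b hb
      simp only [List.mem_cons, List.not_mem_nil, or_false] at hb
      subst hb
      exact ne_of_gt h34
end
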